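/- Let p, q ∈ ℝ with p = √(1+τ²) and q = (1/τ)√(τ²+λ₁²) for some real τ ≠ 0 and λ₁ > 0, and let α ∈ ℝ with q²cos²α > 1. Set Q = √(q²cos²α − 1). Then the 2×2 matrix M₀ = [[ (λ₁/(st))(1−s²−t²), s ], [ −s, st/λ₁ ]] with t = iτ, s = −iλ₁√((1+τ²)/(τ²+λ₁²))e^{iα}, has trace 2pq·cos α and determinant p², and its eigenvalues are ν± = p(q cos α ± Q). -/

import Mathlib

/-!
The off-diagonal entries contribute `s²` to the determinant, cancelling the `-s²` on the diagonal,
so `det M₀ = 1 - t² = 1 + τ² = p²`. In the trace, writing `e = exp (iα)`, the relations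
`1 + τ² = p²` and `τ² + λ₁² = τ² q²` make the coefficients of `e` and `e⁻¹` both equal to `pq`,
so the trace is `pq (e + e⁻¹) = 2pq cos α`. The eigenvalues are then the roots of
`ν² - 2pq cos α ν + p²`, namely `p (q cos α ± Q)`.
-/

open Real Complex Matrix

theorem Matrix.det_sub_smul_one_fin_two {R : Type*} [CommRing R]
    (M : Matrix (Fin 2) (Fin 2) R) (ν : R) :
    (M - ν • (1 : Matrix (Fin 2) (Fin 2) R)).det = ν ^ 2 - M.trace * ν + M.det := by
  simp only [det_fin_two, trace_fin_two, sub_apply, smul_apply, smul_eq_mul, one_apply_eq,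
    one_apply_ne zero_ne_one, one_apply_ne one_ne_zero]
  ring

theorem Real.div_sqrt_div {x : ℝ} (hx : 0 ≤ x) (y : ℝ) : x / √(x / y) = √x * √y := by
  rw [sqrt_div hx, div_div_eq_mul_div, mul_div_right_comm, div_sqrt]

theorem Real.mul_sqrt_div {x : ℝ} (hx : 0 ≤ x) (y : ℝ) : y * √(x / y) = √x * √y := by
  rw [sqrt_div hx, mul_div_left_comm, div_sqrt]

theorem Complex.exp_I_mul_add_inv (α : ℝ) :
    exp (I * α) + (exp (I * α))⁻¹ = ((2 * Real.cos α : ℝ) : ℂ) := by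
  rw [← exp_neg, mul_comm, ← neg_mul, ← two_cos]
  push_cast
  rfl

/-- The matrix `M₁⁰` of the paper, with `l = λ₁`. -/
def monodromyConst {K : Type*} [Field K] (l s t : K) : Matrix (Fin 2) (Fin 2) K :=
  !![l / (s * t) * (1 - s ^ 2 - t ^ 2), s; -s, s * t / l]

theorem det_monodromyConst {K : Type*} [Field K] {l s t : K} (hl : l ≠ 0) (hs : s ≠ 0)
    (ht : t ≠ 0) : (monodromyConst l s t).det = 1 - t ^ 2 := by
  rw [monodromyConst, det_fin_two_of]
  field_simp
  ring

theorem trace_monodromyConst {l τ r : ℝ} (hl : l ≠ 0) (hτ : τ ≠ 0) (hr : r ≠ 0) {e : ℂ}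
    (he : e ≠ 0) :
    (monodromyConst (l : ℂ) (-I * l * r * e) (I * τ)).trace
      = ((τ ^ 2 + l ^ 2) * r / τ : ℝ) * e + ((1 + τ ^ 2) / r / τ : ℝ) * e⁻¹ := by
  have : (l : ℂ) ≠ 0 := ofReal_ne_zero.2 hl
  have : (τ : ℂ) ≠ 0 := ofReal_ne_zero.2 hτ
  have : (r : ℂ) ≠ 0 := ofReal_ne_zero.2 hr
  rw [monodromyConst, trace_fin_two_of]
  push_cast
  field_simp
  linear_combination -(1 + I ^ 2 * (r : ℂ) ^ 2 * e ^ 2 * (τ : ℂ) ^ 2) * I_sq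

theorem M0_trace_det_eigenvalues (τ lam₁ α p q : ℝ) (hτ : τ ≠ 0)
    (hlam : 0 < lam₁)
    (hp : p = Real.sqrt (1 + τ ^ 2))
    (hq : q = (1 / τ) * Real.sqrt (τ ^ 2 + lam₁ ^ 2))
    (hcos : q ^ 2 * Real.cos α ^ 2 > 1) :
    let Q : ℝ := Real.sqrt (q ^ 2 * Real.cos α ^ 2 - 1)
    let t : ℂ := Complex.I * τ
    let s : ℂ := -Complex.I * lam₁ *
      (Real.sqrt ((1 + τ ^ 2) / (τ ^ 2 + lam₁ ^ 2)) : ℝ) * Complex.exp (Complex.I * α)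
    let M₀ : Matrix (Fin 2) (Fin 2) ℂ :=
      !![(lam₁ : ℂ) / (s * t) * (1 - s ^ 2 - t ^ 2), s; -s, s * t / (lam₁ : ℂ)]
    M₀.trace = ((2 * p * q * Real.cos α : ℝ) : ℂ) ∧
    M₀.det = ((p ^ 2 : ℝ) : ℂ) ∧
    (M₀ - ((p * (q * Real.cos α + Q) : ℝ) : ℂ) • (1 : Matrix (Fin 2) (Fin 2) ℂ)).det = 0 ∧
    (M₀ - ((p * (q * Real.cos α - Q) : ℝ) : ℂ) • (1 : Matrix (Fin 2) (Fin 2) ℂ)).det = 0 := by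
  intro Q t s M₀
  have hr : √((1 + τ ^ 2) / (τ ^ 2 + lam₁ ^ 2)) ≠ 0 := by positivity
  have hs : s ≠ 0 := by simp [s, hlam.ne', hr, Complex.exp_ne_zero]
  have ht : t ≠ 0 := by simp [t, hτ]
  have hM : M₀ = monodromyConst (lam₁ : ℂ) s t := rfl
  have htrace : M₀.trace = ((2 * p * q * Real.cos α : ℝ) : ℂ) := by
    rw [hM, trace_monodromyConst hlam.ne' hτ hr (exp_ne_zero _), div_sqrt_div (by positivity),
      mul_sqrt_div (by positivity), ← mul_add, exp_I_mul_add_inv, hp, hq]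
    push_cast
    field_simp
  have hdet : M₀.det = ((p ^ 2 : ℝ) : ℂ) := by
    rw [hM, det_monodromyConst (ofReal_ne_zero.2 hlam.ne') hs ht, hp, sq_sqrt (by positivity)]
    push_cast
    linear_combination -(τ : ℂ) ^ 2 * I_sq
  have hQ : Q ^ 2 = q ^ 2 * Real.cos α ^ 2 - 1 := sq_sqrt (by linarith)
  refine ⟨htrace, hdet, ?_, ?_⟩ <;>
  · rw [det_sub_smul_one_fin_two, htrace, hdet]
    norm_cast
    linear_combination p ^ 2 * hQ
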